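/- The partial derivative with respect to ε of f(μ, ε) = Φ(μ/2 - ε/μ) - e^ε Φ(-μ/2 - ε/μ) equals -e^ε Φ(-μ/2 - ε/μ); in particular f is strictly decreasing in ε for every fixed μ > 0. -/

import Mathlib

noncomputable def stdNormalPDF (x : ℝ) : ℝ :=
  (Real.sqrt (2 * Real.pi))⁻¹ * Real.exp (-x ^ 2 / 2)

noncomputable def stdNormalCDF (x : ℝ) : ℝ := ∫ t in Set.Iic x, stdNormalPDF t

noncomputable def gaussF (μ ε : ℝ) : ℝ :=
  stdNormalCDF (μ / 2 - ε / μ) - Real.exp ε * stdNormalCDF (-μ / 2 - ε / μ)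

/-!
Differentiating the two terms of `gaussF μ` produces, besides `-exp ε * Φ(-μ/2 - ε/μ)`, the two
density terms `-φ(μ/2 - ε/μ)/μ` and `exp ε * φ(-μ/2 - ε/μ)/μ`. These cancel: `φ` is even and
`exp ε * φ(μ/2 + ε/μ) = φ(μ/2 - ε/μ)` after completing the square. The derivative left over is
negative because `Φ > 0`.
-/

open MeasureTheory Set ProbabilityTheory

theorem hasDerivAt_integral_Iic {E : Type*} [NormedAddCommGroup E] [NormedSpace ℝ E]
    [CompleteSpace E] {f : ℝ → E} (hf : Integrable f) {x : ℝ} (hx : ContinuousAt f x) :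
    HasDerivAt (fun y => ∫ t in Iic y, f t) (f x) x := by
  have hsplit : (fun y => ∫ t in Iic y, f t) = fun y => (∫ t in Iic 0, f t) + ∫ t in 0..y, f t :=
    funext fun y => by
      rw [← intervalIntegral.integral_Iic_sub_Iic hf.integrableOn hf.integrableOn, add_sub_cancel]
  rw [hsplit]
  exact (intervalIntegral.integral_hasDerivAt_right hf.intervalIntegrable
    hf.aestronglyMeasurable.stronglyMeasurableAtFilter hx).const_add _

theorem setIntegral_Iic_pos {f : ℝ → ℝ} (hf : Integrable f) (hpos : ∀ t, 0 < f t) (x : ℝ) :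
    0 < ∫ t in Iic x, f t := by
  rw [setIntegral_pos_iff_support_of_nonneg_ae (ae_of_all _ fun t => (hpos t).le) hf.integrableOn,
    Function.support_eq_univ fun t => (hpos t).ne', univ_inter]
  simp [Real.volume_Iic]

theorem stdNormalPDF_eq_gaussianPDFReal : stdNormalPDF = gaussianPDFReal 0 1 := by
  ext x
  simp [stdNormalPDF, gaussianPDFReal]

theorem integrable_stdNormalPDF : Integrable stdNormalPDF :=
  stdNormalPDF_eq_gaussianPDFReal ▸ integrable_gaussianPDFReal 0 1

theorem continuous_stdNormalPDF : Continuous stdNormalPDF := by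
  unfold stdNormalPDF
  fun_prop

theorem stdNormalPDF_pos (x : ℝ) : 0 < stdNormalPDF x := by
  unfold stdNormalPDF
  positivity

theorem stdNormalPDF_neg (x : ℝ) : stdNormalPDF (-x) = stdNormalPDF x := by
  simp [stdNormalPDF]

theorem exp_mul_stdNormalPDF {μ : ℝ} (hμ : μ ≠ 0) (ε : ℝ) :
    Real.exp ε * stdNormalPDF (μ / 2 + ε / μ) = stdNormalPDF (μ / 2 - ε / μ) := by
  unfold stdNormalPDF
  rw [mul_left_comm, ← Real.exp_add]
  congr 2
  field_simp
  ring

theorem hasDerivAt_stdNormalCDF (x : ℝ) : HasDerivAt stdNormalCDF (stdNormalPDF x) x :=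
  hasDerivAt_integral_Iic integrable_stdNormalPDF continuous_stdNormalPDF.continuousAt

theorem stdNormalCDF_pos (x : ℝ) : 0 < stdNormalCDF x :=
  setIntegral_Iic_pos integrable_stdNormalPDF stdNormalPDF_pos x

theorem gaussF_hasDerivAt {μ : ℝ} (hμ : μ ≠ 0) (ε : ℝ) :
    HasDerivAt (gaussF μ) (-(Real.exp ε * stdNormalCDF (-μ / 2 - ε / μ))) ε := by
  have hargs : ∀ c : ℝ, HasDerivAt (fun e : ℝ => c - e / μ) (-(1 / μ)) ε := fun c => by
    simpa using ((hasDerivAt_id ε).div_const μ).const_sub c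
  have hdensity : stdNormalPDF (-μ / 2 - ε / μ) = stdNormalPDF (μ / 2 + ε / μ) := by
    rw [← stdNormalPDF_neg]
    ring_nf
  refine HasDerivAt.congr_deriv (((hasDerivAt_stdNormalCDF _).comp ε (hargs (μ / 2))).sub
    ((Real.hasDerivAt_exp ε).mul ((hasDerivAt_stdNormalCDF _).comp ε (hargs (-μ / 2))))) ?_
  rw [hdensity]
  linear_combination (1 / μ) * exp_mul_stdNormalPDF hμ ε

theorem gaussF_hasDerivAt_eps (μ : ℝ) (hμ : 0 < μ) (ε : ℝ) :
    HasDerivAt (fun e => gaussF μ e)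
      (-(Real.exp ε * stdNormalCDF (-μ / 2 - ε / μ))) ε ∧
      StrictAnti (fun e => gaussF μ e) :=
  ⟨gaussF_hasDerivAt hμ.ne' ε,
    strictAnti_of_hasDerivAt_neg (gaussF_hasDerivAt hμ.ne') fun e =>
      neg_neg_of_pos (mul_pos (Real.exp_pos e) (stdNormalCDF_pos _))⟩
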